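/- Let Θ be a set of clauses over the language L^n_1 (n unary predicate symbols p₁,...,pₙ, some constants, no function symbols) that is valid in some structure C = ⟨D, I⟩. Then Θ is valid in the Dist_C-canonical structure, i.e. the structure C' whose domain is Dist_C = {⟨I[p₁][a],...,I[pₙ][a]⟩ | a ∈ D} ⊆ {t,f}ⁿ, in which I'[pᵢ][⟨s₁,...,sₙ⟩] = sᵢ, and I'[c] = ⟨I[p₁][I[c]],...,I[pₙ][I[c]]⟩ for each constant c occurring in Θ. -/

import Mathlib

/-! Clauses of atomic first-order formulas over a function-free language. -/

/-- Terms of a function-free language: variables (numbered) or constants. -/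
inductive CTm (C : Type) where
  | var : ℕ → CTm C
  | const : C → CTm C

/-- Atomic formulas: a predicate applied to terms. -/
structure CAtom (P : Type) (ar : P → ℕ) (C : Type) where
  pred : P
  args : Fin (ar pred) → CTm C

/-- A clause: a sequent `Γ ⇒ Δ` of atomic formulas. -/
structure CClause (P : Type) (ar : P → ℕ) (C : Type) where
  ant : List (CAtom P ar C)
  suc : List (CAtom P ar C)

/-- A structure for the function-free language: a nonempty domain, an
interpretation of constants and of predicates (two-valued). -/
structure CStruc (P : Type) (ar : P → ℕ) (C : Type) where
  D : Type
  ne : Nonempty D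
  cI : C → D
  pI : (p : P) → (Fin (ar p) → D) → Bool

variable {P C : Type} {ar : P → ℕ}

def CTm.eval (S : CStruc P ar C) (v : ℕ → S.D) : CTm C → S.D
  | .var n => v n
  | .const c => S.cI c

def CAtom.eval (S : CStruc P ar C) (v : ℕ → S.D) (a : CAtom P ar C) : Bool :=
  S.pI a.pred (fun i => (a.args i).eval S v)

/-- A clause `Γ ⇒ Δ` is true in `S` under assignment `v` if some member of `Γ`
is false or some member of `Δ` is true. -/
def CClause.trueIn (S : CStruc P ar C) (v : ℕ → S.D) (cl : CClause P ar C) : Prop :=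
  (∃ a ∈ cl.ant, a.eval S v = false) ∨ (∃ a ∈ cl.suc, a.eval S v = true)

/-- Classical consistency (satisfiability) of a set of clauses: some structure
and some assignment of domain elements to the variables make all clauses true. -/
def Consistent (Θ : Set (CClause P ar C)) : Prop :=
  ∃ (S : CStruc P ar C) (v : ℕ → S.D), ∀ cl ∈ Θ, cl.trueIn S v

/-- Validity of a set of clauses in a structure: all clauses are true
under every assignment. -/
def ValidIn (S : CStruc P ar C) (Θ : Set (CClause P ar C)) : Prop :=
  ∀ v : ℕ → S.D, ∀ cl ∈ Θ, cl.trueIn S v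

/-! The language `L^n_1`: `n` unary predicate symbols. -/

/-- The distribution of a structure for `L^n_1`:
`Dist_C = {⟨I[p₁][a],…,I[pₙ][a]⟩ | a ∈ D}`. -/
def DistC {n : ℕ} {C : Type} (S : CStruc (Fin n) (fun _ => 1) C) : Set (Fin n → Bool) :=
  {t | ∃ a : S.D, t = fun i => S.pI i (fun _ => a)}

/-- The `E`-canonical structure (for a nonempty `E ⊆ {t,f}ⁿ`) with a given
interpretation of the constants: its domain is `E` itself, and
`I[pᵢ][⟨s₁,…,sₙ⟩] = sᵢ`. -/
def canonStruc {n : ℕ} {C : Type} (E : Set (Fin n → Bool)) (hE : E.Nonempty)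
    (cI : C → {t // t ∈ E}) : CStruc (Fin n) (fun _ => 1) C where
  D := {t // t ∈ E}
  ne := hE.to_subtype
  cI := cI
  pI := fun i b => (b 0).val i

/-- The `Dist_C`-canonical structure `C'` derived from a structure `C = ⟨D,I⟩`:
its domain is `Dist_C`, `I'[pᵢ][⟨s₁,…,sₙ⟩] = sᵢ`, and each constant `c` is
interpreted by `⟨I[p₁][I[c]],…,I[pₙ][I[c]]⟩`. -/
def canonOf {n : ℕ} {C : Type} (S : CStruc (Fin n) (fun _ => 1) C) :
    CStruc (Fin n) (fun _ => 1) C where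
  D := {t // t ∈ DistC S}
  ne := by
    obtain ⟨a⟩ := S.ne
    exact ⟨⟨fun i => S.pI i (fun _ => a), ⟨a, rfl⟩⟩⟩
  cI := fun c => ⟨fun i => S.pI i (fun _ => S.cI c), ⟨S.cI c, rfl⟩⟩
  pI := fun i b => (b 0).val i

/-! Sending each element to its row of truth values `⟨I[p₁][a],…,I[pₙ][a]⟩` is a surjective
strong homomorphism onto the `Dist_C`-canonical structure. Strong homomorphisms preserve the
truth of clauses under an assignment, and surjectivity lets every assignment into `Dist_C` be
lifted to one into the original domain. -/

structure CStruc.IsStrongHom (S T : CStruc P ar C) (f : S.D → T.D) : Prop where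
  map_cI : ∀ c, f (S.cI c) = T.cI c
  map_pI : ∀ p args, T.pI p (f ∘ args) = S.pI p args

namespace CStruc.IsStrongHom

variable {S T : CStruc P ar C} {f : S.D → T.D}

theorem eval_tm_comp (hf : IsStrongHom S T f) (v : ℕ → S.D) (t : CTm C) :
    t.eval T (f ∘ v) = f (t.eval S v) := by
  cases t with
  | var m => rfl
  | const c => exact (hf.map_cI c).symm

theorem eval_atom_comp (hf : IsStrongHom S T f) (v : ℕ → S.D) (a : CAtom P ar C) :
    a.eval T (f ∘ v) = a.eval S v := by
  simp only [CAtom.eval, hf.eval_tm_comp]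
  exact hf.map_pI a.pred _

theorem trueIn_comp_iff (hf : IsStrongHom S T f) (v : ℕ → S.D) (cl : CClause P ar C) :
    cl.trueIn T (f ∘ v) ↔ cl.trueIn S v := by
  simp only [CClause.trueIn, hf.eval_atom_comp]

theorem validIn_of_surjective (hf : IsStrongHom S T f) (hsurj : f.Surjective)
    {Θ : Set (CClause P ar C)} (h : ValidIn S Θ) : ValidIn T Θ := by
  intro v cl hcl
  obtain ⟨w, rfl⟩ : ∃ w, f ∘ w = v := hsurj.comp_left v
  exact (hf.trueIn_comp_iff w cl).2 (h w cl hcl)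

end CStruc.IsStrongHom

def toCanonOf {n : ℕ} (S : CStruc (Fin n) (fun _ => 1) C) (a : S.D) : (canonOf S).D :=
  ⟨fun i => S.pI i (fun _ => a), a, rfl⟩

theorem toCanonOf_surjective {n : ℕ} (S : CStruc (Fin n) (fun _ => 1) C) :
    (toCanonOf S).Surjective := by
  rintro ⟨_, a, rfl⟩
  exact ⟨a, rfl⟩

theorem isStrongHom_toCanonOf {n : ℕ} (S : CStruc (Fin n) (fun _ => 1) C) :
    S.IsStrongHom (canonOf S) (toCanonOf S) where
  map_cI _ := rfl
  map_pI i args := by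
    change S.pI i (fun _ => args 0) = S.pI i args
    congr 1
    funext j
    rw [Subsingleton.elim j 0]

/-- If a set of clauses `Θ` over `L^n_1` is valid in some
structure `C = ⟨D,I⟩`, then it is valid in the `Dist_C`-canonical structure. -/
theorem validIn_canonOf {n : ℕ} {C : Type} (S : CStruc (Fin n) (fun _ => 1) C)
    (Θ : Set (CClause (Fin n) (fun _ => 1) C)) (h : ValidIn S Θ) :
    ValidIn (canonOf S) Θ :=
  (isStrongHom_toCanonOf S).validIn_of_surjective (toCanonOf_surjective S) h
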